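/- Let L = ({0} × ℝ) ∪ {∞} ⊆ OnePoint(ℂ × ℝ) be the one-point compactification of the rotation axis, and let Q be the quotient topological space of OnePoint(ℂ × ℝ) obtained by collapsing L to a single point, with quotient map q. Then there is a homeomorphism e : Q → OnePoint(S¹ × ℂ) which is S¹-equivariant in the sense that e(q(g·x)) = g·e(q(x)) for all g ∈ S¹ and all x ∈ OnePoint(ℂ × ℝ), where S¹ acts on OnePoint(S¹ × ℂ) by g·(u,w) = (g·u, w) and g·∞ = ∞. (That is, the cofiber S^V/S¹ of the inclusion of the compactified axis into S^V is S¹-equivariantly homeomorphic to Σ²(S¹₊) ≅ OnePoint(S¹ × ℝ²).) -/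

import Mathlib

open OnePoint

noncomputable section
open Filter Topology

/-- `S^V`: the one-point compactification of `V = ℝ³ ≅ ℂ × ℝ`. -/
abbrev SV : Type := OnePoint (ℂ × ℝ)

/-- The rotation action of the circle group `S¹` on `S^V = OnePoint (ℂ × ℝ)`:
`g • (w, t) = (g * w, t)` and `g • ∞ = ∞`. -/
def act (g : Circle) : SV → SV :=
  OnePoint.map fun p : ℂ × ℝ => ((g : ℂ) * p.1, p.2)

/-- The action of `S¹` on `OnePoint (S¹ × ℂ)`: `g • (u, w) = (g * u, w)`, `g • ∞ = ∞`. -/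
def actT (g : Circle) : OnePoint (Circle × ℂ) → OnePoint (Circle × ℂ) :=
  OnePoint.map fun p : Circle × ℂ => (g * p.1, p.2)

/-- The compactified rotation axis `L = ({0} × ℝ) ∪ {∞} ⊆ OnePoint (ℂ × ℝ)`. -/
def axisL : Set SV :=
  {x | x = ∞ ∨ ∃ t : ℝ, x = (((0 : ℂ), t) : ℂ × ℝ)}

/-- The setoid on `S^V` collapsing the compactified axis `L` to a single point. -/
def collapseSetoid : Setoid SV where
  r x y := x = y ∨ (x ∈ axisL ∧ y ∈ axisL)
  iseqv := by
    refine ⟨fun x => Or.inl rfl, ?_, ?_⟩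
    · rintro x y (rfl | h)
      · exact Or.inl rfl
      · exact Or.inr ⟨h.2, h.1⟩
    · rintro x y z (rfl | hxy) hyz
      · exact hyz
      · rcases hyz with rfl | hyz
        · exact Or.inr hxy
        · exact Or.inr ⟨hxy.1, hyz.2⟩

/-- The quotient `Q = S^V / L` obtained by collapsing the compactified axis to a point. -/
abbrev QuotSV : Type := Quotient collapseSetoid


/-- unit direction of a nonzero complex number (junk value 1 at 0). -/
def dir (w : ℂ) : Circle :=
  if h : w = 0 then 1 else ⟨w / ‖w‖, by
    simp [Submonoid.unitSphere, mem_sphere_zero_iff_norm, norm_div, norm_ne_zero_iff, h]⟩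

lemma dir_coe {w : ℂ} (h : w ≠ 0) : (dir w : ℂ) = w / ‖w‖ := by simp [dir, h]

def psiC (p : ℂ × ℝ) : Circle × ℂ := (dir p.1, ⟨Real.log ‖p.1‖, p.2⟩)

def toT (p : ℂ × ℝ) : OnePoint (Circle × ℂ) :=
  if p.1 = 0 then ∞ else (psiC p : OnePoint (Circle × ℂ))

lemma norm_circle (u : Circle) : ‖(u : ℂ)‖ = 1 := by
  exact Circle.norm_coe u

lemma bound_of_compact {s : Set (Circle × ℂ)} (hs : IsCompact s) :
    ∃ R : ℝ, 0 ≤ R ∧ ∀ q ∈ s, ‖q.2‖ ≤ R := by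
  rcases (hs.image (continuous_snd.norm)).bddAbove with ⟨R, hR⟩
  refine ⟨max R 0, le_max_right _ _, fun q hq => le_trans ?_ (le_max_left _ _)⟩
  exact hR ⟨q, hq, rfl⟩

lemma continuousAt_dir {w : ℂ} (h : w ≠ 0) : ContinuousAt dir w := by
  have hInd : Topology.IsInducing ((↑) : Circle → ℂ) := Topology.IsInducing.subtypeVal
  refine (hInd.continuousAt_iff (f := dir)).mpr ?_
  have hcont : ContinuousAt (fun w : ℂ => w / (‖w‖ : ℂ)) w := by
    apply ContinuousAt.div continuousAt_id
    · exact (Complex.continuous_ofReal.comp continuous_norm).continuousAt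
    · simpa [Complex.ofReal_ne_zero, norm_ne_zero_iff] using h
  apply hcont.congr
  filter_upwards [isOpen_compl_singleton.mem_nhds h] with x hx
  exact (dir_coe hx).symm

lemma continuousAt_psiC {p : ℂ × ℝ} (h : p.1 ≠ 0) : ContinuousAt psiC p := by
  apply ContinuousAt.prodMk
  · exact (continuousAt_dir h).comp continuousAt_fst
  · have : (fun p : ℂ × ℝ => (⟨Real.log ‖p.1‖, p.2⟩ : ℂ))
        = fun p : ℂ × ℝ => (Real.log ‖p.1‖ : ℂ) + p.2 * Complex.I := by
      funext q; rw [Complex.mk_eq_add_mul_I]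
    rw [this]
    apply ContinuousAt.add
    · exact (Complex.continuous_ofReal.continuousAt).comp
        ((Real.continuousAt_log (by simpa [norm_ne_zero_iff] using h)).comp
          (continuous_fst.norm.continuousAt))
    · exact ((Complex.continuous_ofReal.comp continuous_snd).mul continuous_const).continuousAt

lemma norm_psiC_snd_re (p : ℂ × ℝ) : (psiC p).2.re = Real.log ‖p.1‖ := rfl

lemma cont_toT : Continuous toT := by
  rw [continuous_iff_continuousAt]
  intro p
  by_cases h : p.1 = 0
  · -- tends to ∞
    have hval : toT p = ∞ := by simp [toT, h]
    rw [ContinuousAt, hval, hasBasis_nhds_infty.tendsto_right_iff]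
    rintro s ⟨hscl, hscp⟩
    obtain ⟨R, hR0, hR⟩ := bound_of_compact hscp
    have hmem : {x : ℂ × ℝ | ‖x.1‖ < Real.exp (-(R + 1))} ∈ 𝓝 p := by
      have : ContinuousAt (fun x : ℂ × ℝ => ‖x.1‖) p := continuous_fst.norm.continuousAt
      have hlt : ‖p.1‖ < Real.exp (-(R + 1)) := by
        rw [h]; simpa using Real.exp_pos _
      exact this.preimage_mem_nhds (Iio_mem_nhds hlt)
    filter_upwards [hmem] with x hx
    by_cases hx0 : x.1 = 0
    · right; simp [toT, hx0]
    · left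
      refine ⟨psiC x, fun hmem' => ?_, by simp [toT, hx0]⟩
      have hb := hR _ hmem'
      have h1 : Real.log ‖x.1‖ < -(R + 1) := by
        have := Real.log_lt_log (norm_pos_iff.mpr hx0) hx
        simpa [Real.log_exp] using this
      have h2 : |(psiC x).2.re| ≤ ‖(psiC x).2‖ := by
        exact Complex.abs_re_le_norm _
      rw [norm_psiC_snd_re] at h2
      have hneg : Real.log ‖x.1‖ < 0 := by linarith
      have habs : |Real.log ‖x.1‖| = -Real.log ‖x.1‖ := abs_of_neg hneg
      rw [habs] at h2
      linarith
  · have hev : ∀ᶠ x in 𝓝 p, toT x = ((psiC x : Circle × ℂ) : OnePoint (Circle × ℂ)) := by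
      have : {x : ℂ × ℝ | x.1 ≠ 0} ∈ 𝓝 p :=
        (isOpen_compl_singleton.preimage continuous_fst).mem_nhds h
      filter_upwards [this] with x hx
      simp [toT, hx]
    have : ContinuousAt (fun x => ((psiC x : Circle × ℂ) : OnePoint (Circle × ℂ))) p :=
      (OnePoint.continuous_coe.continuousAt).comp (continuousAt_psiC h)
    exact this.congr (by filter_upwards [hev] with x hx using hx.symm)

lemma tend_infty : Tendsto toT (coclosedCompact (ℂ × ℝ)) (𝓝 (∞ : OnePoint (Circle × ℂ))) := by
  rw [hasBasis_nhds_infty.tendsto_right_iff]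
  rintro s ⟨hscl, hscp⟩
  obtain ⟨R, hR0, hR⟩ := bound_of_compact hscp
  rw [eventually_iff, hasBasis_coclosedCompact.mem_iff]; simp only [and_assoc]
  refine ⟨Metric.closedBall (0 : ℂ) (Real.exp (R + 1)) ×ˢ Metric.closedBall (0 : ℝ) (R + 1),
    (Metric.isClosed_closedBall).prod (Metric.isClosed_closedBall),
    (isCompact_closedBall _ _).prod (isCompact_closedBall _ _), ?_⟩
  intro x hx
  simp only [Set.mem_compl_iff, Set.mem_prod, Metric.mem_closedBall, dist_zero_right,
    not_and_or, not_le] at hx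
  by_cases hx0 : x.1 = 0
  · right; simp [toT, hx0]
  · left
    refine ⟨psiC x, fun hmem' => ?_, by simp [toT, hx0]⟩
    have hb := hR _ hmem'
    rcases hx with hx | hx
    · have h1 : R + 1 < Real.log ‖x.1‖ := by
        have := Real.log_lt_log (Real.exp_pos _) hx
        simpa [Real.log_exp] using this
      have h2 : (psiC x).2.re ≤ ‖(psiC x).2‖ := by
        exact le_trans (le_abs_self _) (Complex.abs_re_le_norm _)
      rw [norm_psiC_snd_re] at h2
      linarith
    · have h2 : |x.2| ≤ ‖(psiC x).2‖ := by
        exact Complex.abs_im_le_norm (psiC x).2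
      rw [Real.norm_eq_abs] at hx
      linarith

def fwd : SV → OnePoint (Circle × ℂ) := fun x => Option.rec ∞ toT x

@[simp] lemma fwd_infty : fwd ∞ = ∞ := rfl
@[simp] lemma fwd_coe (p : ℂ × ℝ) : fwd ↑p = toT p := rfl

lemma fwd_axis {x : SV} (hx : x ∈ axisL) : fwd x = ∞ := by
  rcases hx with rfl | ⟨t, rfl⟩
  · rfl
  · simp [toT]

lemma fwd_resp : ∀ x y : SV, collapseSetoid.r x y → fwd x = fwd y := by
  rintro x y (rfl | ⟨hx, hy⟩)
  · rfl
  · rw [fwd_axis hx, fwd_axis hy]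

def bwdP (q : Circle × ℂ) : ℂ × ℝ := ((Real.exp q.2.re : ℂ) * q.1, q.2.im)

lemma bwdP_fst_ne_zero (q : Circle × ℂ) : (bwdP q).1 ≠ 0 :=
  mul_ne_zero (by simpa [Complex.ofReal_ne_zero] using (Real.exp_pos q.2.re).ne')
    (Circle.coe_ne_zero q.1)

lemma norm_bwdP_fst (q : Circle × ℂ) : ‖(bwdP q).1‖ = Real.exp q.2.re := by
  simp [bwdP, norm_circle, abs_of_pos (Real.exp_pos _)]

lemma bwdP_psiC {p : ℂ × ℝ} (h : p.1 ≠ 0) : bwdP (psiC p) = p := by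
  have hpos : (0 : ℝ) < ‖p.1‖ := norm_pos_iff.mpr h
  have hne : (‖p.1‖ : ℂ) ≠ 0 := by
    simpa [Complex.ofReal_ne_zero] using hpos.ne'
  refine Prod.ext_iff.mpr ⟨?_, rfl⟩
  show (Real.exp (Real.log ‖p.1‖) : ℂ) * (dir p.1 : ℂ) = p.1
  rw [Real.exp_log hpos, dir_coe h, mul_comm, div_mul_cancel₀ _ hne]

lemma psiC_bwdP (q : Circle × ℂ) : psiC (bwdP q) = q := by
  have hn := norm_bwdP_fst q
  have hexp : ((Real.exp q.2.re : ℝ) : ℂ) ≠ 0 := by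
    simpa [Complex.ofReal_ne_zero] using (Real.exp_pos q.2.re).ne'
  refine Prod.ext_iff.mpr ⟨Circle.ext ?_, ?_⟩
  · rw [show ((psiC (bwdP q)).1 : ℂ) = (bwdP q).1 / (‖(bwdP q).1‖ : ℂ) from
      dir_coe (bwdP_fst_ne_zero q), hn]
    show ((Real.exp q.2.re : ℂ) * (q.1 : ℂ)) / ((Real.exp q.2.re : ℝ) : ℂ) = (q.1 : ℂ)
    exact mul_div_cancel_left₀ _ hexp
  · show (⟨Real.log ‖(bwdP q).1‖, q.2.im⟩ : ℂ) = q.2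
    rw [hn, Real.log_exp]

def e0 : QuotSV ≃ OnePoint (Circle × ℂ) where
  toFun := Quotient.lift fwd fwd_resp
  invFun := fun y =>
    Option.rec (Quotient.mk collapseSetoid ∞)
      (fun q => Quotient.mk collapseSetoid ↑(bwdP q)) y
  left_inv := by
    refine Quotient.ind ?_
    intro x
    induction x using OnePoint.rec with
    | infty => rfl
    | coe p =>
      by_cases h : p.1 = 0
      · have h1 : fwd ↑p = ∞ := by simp [toT, h]
        simp only [Quotient.lift_mk, h1]
        refine Quotient.sound (Or.inr ⟨Or.inl rfl, Or.inr ⟨p.2, ?_⟩⟩)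
        rw [show p = ((0 : ℂ), p.2) from Prod.ext_iff.mpr ⟨h, rfl⟩]
      · have h1 : fwd ↑p = ↑(psiC p) := by simp [toT, h]
        simp only [Quotient.lift_mk, h1]
        show Quotient.mk collapseSetoid ↑(bwdP (psiC p)) = Quotient.mk collapseSetoid ↑p
        rw [bwdP_psiC h]
  right_inv := by
    intro y
    induction y using OnePoint.rec with
    | infty => rfl
    | coe q =>
      show toT (bwdP q) = ↑q
      rw [show toT (bwdP q) = ↑(psiC (bwdP q)) from if_neg (bwdP_fst_ne_zero q), psiC_bwdP]

instance : CompactSpace QuotSV := Quotient.compactSpace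

instance : T2Space (OnePoint (Circle × ℂ)) :=
  have : T4Space (OnePoint (Circle × ℂ)) := inferInstance
  inferInstance

lemma cont_e0 : Continuous (e0 : QuotSV → OnePoint (Circle × ℂ)) := by
  apply Continuous.quotient_lift _ fwd_resp
  rw [OnePoint.continuous_iff]
  exact ⟨tend_infty, cont_toT⟩

lemma fwd_act (g : Circle) (x : SV) : fwd (act g x) = actT g (fwd x) := by
  induction x using OnePoint.rec with
  | infty => rfl
  | coe p =>
    simp only [act, actT, OnePoint.map_some, fwd_coe]
    by_cases h : p.1 = 0
    · simp [toT, h]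
    · have hg : (g : ℂ) * p.1 ≠ 0 := mul_ne_zero (Circle.coe_ne_zero g) h
      have hnorm : ‖(g : ℂ) * p.1‖ = ‖p.1‖ := by simp [norm_circle]
      rw [show toT ((g : ℂ) * p.1, p.2) = ↑(psiC ((g : ℂ) * p.1, p.2)) from if_neg hg,
        show toT p = ↑(psiC p) from if_neg h, OnePoint.map_some]
      congr 1
      refine Prod.ext_iff.mpr ⟨Circle.ext ?_, ?_⟩
      · rw [show ((psiC ((g : ℂ) * p.1, p.2)).1 : ℂ)
            = ((g : ℂ) * p.1) / (‖((g : ℂ) * p.1, p.2).1‖ : ℂ) from dir_coe hg,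
          Circle.coe_mul,
          show ((psiC p).1 : ℂ) = p.1 / (‖p.1‖ : ℂ) from dir_coe h]
        show ((g : ℂ) * p.1) / ((‖(g : ℂ) * p.1‖ : ℝ) : ℂ) = (g : ℂ) * (p.1 / (‖p.1‖ : ℂ))
        rw [hnorm, mul_div_assoc]
      · show (⟨Real.log ‖(g : ℂ) * p.1‖, p.2⟩ : ℂ) = (⟨Real.log ‖p.1‖, p.2⟩ : ℂ)
        rw [hnorm]


/-- Segal's identification: the cofiber `S^V / S¹` of the inclusion of the compactified
rotation axis into `S^V` is `S¹`-equivariantly homeomorphic to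
`Σ²(S¹₊) ≅ OnePoint (S¹ × ℂ)`. -/
theorem cofiber_axis_equivariant_homeo :
    ∃ e : QuotSV ≃ₜ OnePoint (Circle × ℂ),
      ∀ (g : Circle) (x : SV),
        e (Quotient.mk collapseSetoid (act g x)) =
          actT g (e (Quotient.mk collapseSetoid x)) := by
  refine ⟨Continuous.homeoOfEquivCompactToT2 (f := e0) cont_e0, fun g x => ?_⟩
  show fwd (act g x) = actT g (fwd x)
  exact fwd_act g x
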